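/- arXiv:2409.19687 — 7 statements merged into one kernel-verified Lean document; each statement's English description precedes it below -/
import Mathlib

section
/- The quadratic operator W maps the simplex S^{2m-1} into itself: for every x ∈ S^{2m-1}, W(x) ∈ S^{2m-1}. -/
open Finset

/-- The evolution operator `W` on `ℝ^{2m}`, where a point `x` is encoded as
`x : Fin m → ℝ × ℝ` with `(x i).1 = x_{2i-1}` and `(x i).2 = x_{2i}`. -/
noncomputable def W {m : ℕ} (a : Fin m → Fin m → ℝ) (x : Fin m → ℝ × ℝ) : Fin m → ℝ × ℝ :=
  fun i =>
    ((x i).1 + ∑ j, a i j * ((x i).2 * (x j).1 - (x i).1 * (x j).2),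
     (x i).2 - ∑ j, a i j * ((x i).2 * (x j).1 - (x i).1 * (x j).2))

/-- The simplex `S^{2m-1}` in the pair encoding. -/
def pairSimplex (m : ℕ) : Set (Fin m → ℝ × ℝ) :=
  {x | (∀ i, 0 ≤ (x i).1 ∧ 0 ≤ (x i).2) ∧ ∑ i, ((x i).1 + (x i).2) = 1}

theorem stmt_0 {m : ℕ} (hm : 2 ≤ m) (a : Fin m → Fin m → ℝ)
    (ha : ∀ i j, a i j ∈ Set.Icc (0 : ℝ) 1) :
    ∀ x ∈ pairSimplex m, W a x ∈ pairSimplex m := by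
  rintro x ⟨hpos, hsum⟩
  have h1 : ∑ j, (x j).1 ≤ 1 := by
    calc ∑ j, (x j).1 ≤ ∑ j, ((x j).1 + (x j).2) :=
          Finset.sum_le_sum fun j _ => by linarith [(hpos j).2]
      _ = 1 := hsum
  have h2 : ∑ j, (x j).2 ≤ 1 := by
    calc ∑ j, (x j).2 ≤ ∑ j, ((x j).1 + (x j).2) :=
          Finset.sum_le_sum fun j _ => by linarith [(hpos j).1]
      _ = 1 := hsum
  constructor
  · intro i
    have hlo : ∑ j, (-((x i).1 * (x j).2)) ≤
        ∑ j, a i j * ((x i).2 * (x j).1 - (x i).1 * (x j).2) :=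
      Finset.sum_le_sum fun j _ => by
        nlinarith [mul_nonneg (ha i j).1 (mul_nonneg (hpos i).2 (hpos j).1),
          mul_nonneg (sub_nonneg.2 (ha i j).2) (mul_nonneg (hpos i).1 (hpos j).2)]
    have hhi : ∑ j, a i j * ((x i).2 * (x j).1 - (x i).1 * (x j).2) ≤
        ∑ j, (x i).2 * (x j).1 :=
      Finset.sum_le_sum fun j _ => by
        nlinarith [mul_nonneg (ha i j).1 (mul_nonneg (hpos i).1 (hpos j).2),
          mul_nonneg (sub_nonneg.2 (ha i j).2) (mul_nonneg (hpos i).2 (hpos j).1)]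
    have e1 : ∑ j, (-((x i).1 * (x j).2)) = -((x i).1 * ∑ j, (x j).2) := by
      simp [Finset.mul_sum]
    have e2 : ∑ j, (x i).2 * (x j).1 = (x i).2 * ∑ j, (x j).1 := by
      rw [Finset.mul_sum]
    constructor
    · show 0 ≤ (x i).1 + _
      rw [e1] at hlo
      nlinarith [(hpos i).1]
    · show 0 ≤ (x i).2 - _
      rw [e2] at hhi
      nlinarith [(hpos i).2]
  · show ∑ i, ((x i).1 + ∑ j, a i j * ((x i).2 * (x j).1 - (x i).1 * (x j).2)
        + ((x i).2 - ∑ j, a i j * ((x i).2 * (x j).1 - (x i).1 * (x j).2))) = 1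
    rw [← hsum]
    exact Finset.sum_congr rfl fun i _ => by ring
end

section
/- If a_{ij} > 0 for all 1 ≤ i,j ≤ m and c ∈ S^{m-1} satisfies c_i > 0 for all i, then every eigenvalue λ of B_c satisfies |λ| ≤ 1, the eigenvalue 1 of B_c is simple (algebraic multiplicity 1), and every eigenvalue λ ≠ 1 satisfies |λ| < 1. -/
open Finset Matrix Polynomial

/-- The matrix `B_c` with `b_{ii} = 1 - ∑_{j≠i} a_{ij} c_j` and `b_{ik} = c_i a_{ik}` for `i ≠ k`. -/
noncomputable def Bmat {m : ℕ} (a : Fin m → Fin m → ℝ) (c : Fin m → ℝ) :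
    Matrix (Fin m) (Fin m) ℝ :=
  Matrix.of fun i k =>
    if i = k then 1 - ∑ j ∈ Finset.univ.erase i, a i j * c j else c i * a i k

/-!
Conjugating by `diagonal c` turns `B_c` into a matrix `S` with positive entries and row sums `1`.
Acting on `ℂᵐ` with the sup norm, `S` is nonexpansive, which bounds every eigenvalue by `1`.
If `S v = λ v` with `‖λ‖ = 1`, then at a coordinate `i` of maximal modulus the convex combination
`∑ₖ S i k • v k = λ v i` has the maximal modulus too, so strict convexity of `ℂ` forces `v` to be
constant and hence `λ = 1`. Finally, a nonexpansive map has no Jordan chain `S y = y + w`,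
`S w = w`, `w ≠ 0`, since `Sʲ y = y + j • w` would be unbounded; so the generalized eigenspace of
`1` is the eigenspace, the line of constant vectors, and `1` is a simple root of the characteristic
polynomial.
-/

lemma eq_zero_of_map_eq_add_of_norm_map_le {E F : Type*} [NormedAddCommGroup E]
    [NormedSpace ℝ E] [FunLike F E E] [AddMonoidHomClass F E E] {f : F}
    (hf : ∀ x, ‖f x‖ ≤ ‖x‖) {w y : E} (hw : f w = w) (hy : f y = y + w) : w = 0 := by
  have iterate_eq : ∀ j : ℕ, f^[j] y = y + j • w := by
    intro j
    induction j with
    | zero => simp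
    | succ j ih =>
      rw [Function.iterate_succ_apply', ih, map_add, map_nsmul, hy, hw, succ_nsmul]
      abel
  have iterate_le : ∀ j : ℕ, ‖f^[j] y‖ ≤ ‖y‖ := by
    intro j
    induction j with
    | zero => simp
    | succ j ih => exact (Function.iterate_succ_apply' f j y ▸ hf _).trans ih
  have linear_le : ∀ j : ℕ, j * ‖w‖ ≤ 2 * ‖y‖ := fun j =>
    calc j * ‖w‖ = ‖(y + j • w) - y‖ := by simp [RCLike.norm_nsmul ℝ]
      _ ≤ ‖y + j • w‖ + ‖y‖ := norm_sub_le _ _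
      _ ≤ 2 * ‖y‖ := by linarith [iterate_eq j ▸ iterate_le j]
  by_contra hw0
  obtain ⟨j, hj⟩ := exists_nat_gt (2 * ‖y‖ / ‖w‖)
  rw [div_lt_iff₀ (norm_pos_iff.2 hw0)] at hj
  linarith [linear_le j]

lemma Module.End.maxGenEigenspace_eq_eigenspace {R M : Type*} [CommRing R] [AddCommGroup M]
    [Module R M] {f : Module.End R M} {μ : R}
    (h : ∀ x, ((f - μ • 1 : Module.End R M) ^ 2) x = 0 → (f - μ • 1 : Module.End R M) x = 0) :
    f.maxGenEigenspace μ = f.eigenspace μ := by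
  set g : Module.End R M := f - μ • 1
  have ker_pow_le : ∀ (k : ℕ) x, (g ^ k) x = 0 → g x = 0 := by
    intro k
    induction k with
    | zero => simp
    | succ k ih =>
      intro x hx
      rw [pow_succ, Module.End.mul_apply] at hx
      exact h x (by rw [sq, Module.End.mul_apply]; exact ih _ hx)
  refine le_antisymm (fun x hx => ?_) eigenspace_le_maxGenEigenspace
  obtain ⟨k, hk⟩ := (mem_maxGenEigenspace f μ x).1 hx
  simpa [g, sub_eq_zero] using ker_pow_le k x hk

namespace Matrix

variable {n : Type*} [Fintype n]

lemma map_ofReal_mulVec_apply (S : Matrix n n ℝ) (v : n → ℂ) (i : n) :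
    (S.map Complex.ofReal *ᵥ v) i = ∑ k, S i k • v k := by
  simp [mulVec, dotProduct, Complex.real_smul]

variable [DecidableEq n]

lemma exists_mulVec_eq_smul_of_isRoot_charpoly {K : Type*} [Field K] {A : Matrix n n K} {μ : K}
    (h : A.charpoly.IsRoot μ) : ∃ v ≠ 0, A *ᵥ v = μ • v := by
  rw [← charpoly_toLin', ← Module.End.hasEigenvalue_iff_isRoot_charpoly] at h
  obtain ⟨v, hv⟩ := h.exists_hasEigenvector
  exact ⟨v, hv.2, hv.apply_eq_smul⟩

variable {S : Matrix n n ℝ}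

lemma map_ofReal_mulVec_const (hS : S ∈ rowStochastic ℝ n) (z : ℂ) :
    S.map Complex.ofReal *ᵥ Function.const n z = Function.const n z := by
  ext i
  simp only [map_ofReal_mulVec_apply, Function.const_apply]
  rw [← sum_smul, sum_row_of_mem_rowStochastic hS, one_smul]

lemma norm_map_ofReal_mulVec_le (hS : S ∈ rowStochastic ℝ n) (v : n → ℂ) :
    ‖S.map Complex.ofReal *ᵥ v‖ ≤ ‖v‖ := by
  refine (pi_norm_le_iff_of_nonneg (norm_nonneg v)).2 fun i => ?_
  calc ‖(S.map Complex.ofReal *ᵥ v) i‖ ≤ ∑ k, S i k * ‖v k‖ := by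
        rw [map_ofReal_mulVec_apply]
        refine (norm_sum_le _ _).trans_eq (sum_congr rfl fun k _ => ?_)
        rw [norm_smul, Real.norm_of_nonneg (nonneg_of_mem_rowStochastic hS)]
    _ ≤ ∑ k, S i k * ‖v‖ := by
        gcongr with k
        exacts [nonneg_of_mem_rowStochastic hS, norm_le_pi_norm v k]
    _ = ‖v‖ := by rw [← sum_mul, sum_row_of_mem_rowStochastic hS, one_mul]

lemma norm_le_one_of_mulVec_eq_smul (hS : S ∈ rowStochastic ℝ n) {v : n → ℂ} (hv : v ≠ 0)
    {μ : ℂ} (h : S.map Complex.ofReal *ᵥ v = μ • v) : ‖μ‖ ≤ 1 := by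
  have := norm_map_ofReal_mulVec_le hS v
  rw [h, norm_smul] at this
  exact (mul_le_iff_le_one_left (norm_pos_iff.2 hv)).1 this

lemma eq_of_mulVec_eq_smul_of_norm_eq_one (hS : S ∈ rowStochastic ℝ n) (hpos : ∀ i j, 0 < S i j)
    {v : n → ℂ} {μ : ℂ} (h : S.map Complex.ofReal *ᵥ v = μ • v) (hμ : ‖μ‖ = 1) (k l : n) :
    v k = v l := by
  by_contra hkl
  obtain ⟨i, -, hi⟩ := exists_max_image univ (‖v ·‖) ⟨k, mem_univ k⟩
  have hlt : ‖∑ j, S i j • v j‖ < ‖v i‖ :=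
    norm_sum_lt_of_strictConvexSpace (fun j _ => (hpos i j).le) (sum_row_of_mem_rowStochastic hS i)
      (mem_univ k) (mem_univ l) hkl (hpos i k).ne' (hpos i l).ne' (fun j _ => hi j (mem_univ j))
  rw [← map_ofReal_mulVec_apply, h, Pi.smul_apply, norm_smul, hμ, one_mul] at hlt
  exact hlt.false

lemma eq_one_of_mulVec_eq_smul_of_norm_eq_one (hS : S ∈ rowStochastic ℝ n)
    (hpos : ∀ i j, 0 < S i j) {v : n → ℂ} (hv : v ≠ 0) {μ : ℂ}
    (h : S.map Complex.ofReal *ᵥ v = μ • v) (hμ : ‖μ‖ = 1) : μ = 1 := by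
  obtain ⟨i, hi⟩ := Function.ne_iff.1 hv
  have hconst : v = Function.const n (v i) :=
    funext fun k => eq_of_mulVec_eq_smul_of_norm_eq_one hS hpos h hμ k i
  have := congrFun h i
  rw [hconst, map_ofReal_mulVec_const hS] at this
  exact (mul_eq_right₀ hi).1 this.symm

lemma rootMultiplicity_one_charpoly_map_ofReal [Nonempty n] (hS : S ∈ rowStochastic ℝ n)
    (hpos : ∀ i j, 0 < S i j) : (S.map Complex.ofReal).charpoly.rootMultiplicity 1 = 1 := by
  set f : Module.End ℂ (n → ℂ) := toLin' (S.map Complex.ofReal)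
  have no_jordan_chain : ∀ x, ((f - (1 : ℂ) • 1 : Module.End ℂ (n → ℂ)) ^ 2) x = 0 →
      (f - (1 : ℂ) • 1 : Module.End ℂ (n → ℂ)) x = 0 := by
    intro x hx
    rw [sq, Module.End.mul_apply] at hx
    refine eq_zero_of_map_eq_add_of_norm_map_le (f := f) (y := x)
      (fun y => norm_map_ofReal_mulVec_le hS y) ?_ ?_
    · simpa [sub_eq_zero] using hx
    · simp
  have eigenspace_eq : f.eigenspace 1 = ℂ ∙ Function.const n (1 : ℂ) := by
    ext x
    rw [Module.End.mem_eigenspace_iff, one_smul, Submodule.mem_span_singleton]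
    constructor
    · intro hx
      obtain ⟨i⟩ := ‹Nonempty n›
      refine ⟨x i, funext fun k => ?_⟩
      have := eq_of_mulVec_eq_smul_of_norm_eq_one hS hpos (μ := 1) (by simpa [f] using hx)
        norm_one i k
      simp [this]
    · rintro ⟨z, rfl⟩
      rw [show z • Function.const n (1 : ℂ) = Function.const n z by ext; simp]
      exact map_ofReal_mulVec_const hS z
  rw [← charpoly_toLin', ← LinearMap.finrank_maxGenEigenspace_eq,
    Module.End.maxGenEigenspace_eq_eigenspace no_jordan_chain, eigenspace_eq,
    finrank_span_singleton (by simp)]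

end Matrix

section Bmat

variable {m : ℕ} {a : Fin m → Fin m → ℝ} {c : Fin m → ℝ}

noncomputable def stochasticBmat (a : Fin m → Fin m → ℝ) (c : Fin m → ℝ) :
    Matrix (Fin m) (Fin m) ℝ :=
  of fun i k => if i = k then 1 - ∑ j ∈ univ.erase i, a i j * c j else a i k * c k

lemma Bmat_eq_diagonal_mul_stochasticBmat_mul (hc : ∀ i, c i ≠ 0) :
    Bmat a c = diagonal c * stochasticBmat a c * diagonal c⁻¹ := by
  ext i k
  rw [mul_diagonal, diagonal_mul]
  by_cases h : i = k
  · subst h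
    rw [Bmat, stochasticBmat, of_apply, of_apply, if_pos rfl, if_pos rfl, Pi.inv_apply,
      mul_comm (c i), mul_inv_cancel_right₀ (hc i)]
  · rw [Bmat, stochasticBmat, of_apply, of_apply, if_neg h, if_neg h, Pi.inv_apply,
      mul_assoc, mul_inv_cancel_right₀ (hc k)]

lemma charpoly_Bmat (hc : ∀ i, c i ≠ 0) :
    (Bmat a c).charpoly = (stochasticBmat a c).charpoly := by
  rw [Bmat_eq_diagonal_mul_stochasticBmat_mul hc, charpoly_mul_comm, ← mul_assoc,
    diagonal_mul_diagonal]
  simp [hc]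

lemma sum_erase_mul_le_one_sub (ha : ∀ i j, a i j ≤ 1) (hc : c ∈ stdSimplex ℝ (Fin m))
    (i : Fin m) : ∑ j ∈ univ.erase i, a i j * c j ≤ 1 - c i :=
  calc ∑ j ∈ univ.erase i, a i j * c j ≤ ∑ j ∈ univ.erase i, c j :=
        sum_le_sum fun j _ => mul_le_of_le_one_left (hc.1 j) (ha i j)
    _ = 1 - c i := by rw [← hc.2, ← add_sum_erase univ c (mem_univ i), add_sub_cancel_left]

lemma stochasticBmat_mem_rowStochastic (ha : ∀ i j, a i j ∈ Set.Icc (0 : ℝ) 1)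
    (hc : c ∈ stdSimplex ℝ (Fin m)) : stochasticBmat a c ∈ rowStochastic ℝ (Fin m) := by
  refine mem_rowStochastic_iff_sum.2 ⟨fun i k => ?_, fun i => ?_⟩
  · by_cases h : i = k
    · subst h
      rw [stochasticBmat, of_apply, if_pos rfl]
      linarith [sum_erase_mul_le_one_sub (fun i j => (ha i j).2) hc i, hc.1 i]
    · simpa [stochasticBmat, h] using mul_nonneg (ha i k).1 (hc.1 k)
  · have offdiag : ∀ k ∈ univ.erase i, stochasticBmat a c i k = a i k * c k := fun k hk => by
      simp [stochasticBmat, (ne_of_mem_erase hk).symm]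
    rw [← add_sum_erase univ _ (mem_univ i), sum_congr rfl offdiag]
    simp [stochasticBmat]

lemma stochasticBmat_pos (ha : ∀ i j, a i j ≤ 1) (hapos : ∀ i j, 0 < a i j)
    (hc : c ∈ stdSimplex ℝ (Fin m)) (hcpos : ∀ i, 0 < c i) (i k : Fin m) :
    0 < stochasticBmat a c i k := by
  by_cases h : i = k
  · subst h
    rw [stochasticBmat, of_apply, if_pos rfl]
    linarith [sum_erase_mul_le_one_sub ha hc i, hcpos i]
  · simpa [stochasticBmat, h] using mul_pos (hapos i k) (hcpos k)

end Bmat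

theorem stmt_8_general {m : ℕ} (a : Fin m → Fin m → ℝ)
    (ha : ∀ i j, a i j ∈ Set.Icc (0 : ℝ) 1) (hapos : ∀ i j, 0 < a i j)
    (c : Fin m → ℝ) (hc : c ∈ stdSimplex ℝ (Fin m)) (hcpos : ∀ i, 0 < c i) :
    (∀ lam : ℂ, (((Bmat a c).map Complex.ofReal).charpoly).IsRoot lam →
      ‖lam‖ ≤ 1) ∧
    (((Bmat a c).map Complex.ofReal).charpoly).rootMultiplicity 1 = 1 ∧
    (∀ lam : ℂ, (((Bmat a c).map Complex.ofReal).charpoly).IsRoot lam → lam ≠ 1 →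
      ‖lam‖ < 1) := by
  have hS := stochasticBmat_mem_rowStochastic ha hc
  have hpos := stochasticBmat_pos (fun i j => (ha i j).2) hapos hc hcpos
  have hchar : ((Bmat a c).map Complex.ofReal).charpoly =
      ((stochasticBmat a c).map Complex.ofReal).charpoly := by
    have := congrArg (Polynomial.map Complex.ofRealHom)
      (charpoly_Bmat (a := a) fun i => (hcpos i).ne')
    rwa [← charpoly_map, ← charpoly_map] at this
  have : Nonempty (Fin m) := univ_nonempty_iff.1 (nonempty_of_sum_ne_zero (hc.2 ▸ one_ne_zero))
  rw [hchar]
  refine ⟨fun lam h => ?_, rootMultiplicity_one_charpoly_map_ofReal hS hpos, fun lam h hne => ?_⟩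
  · obtain ⟨v, hv, hlam⟩ := exists_mulVec_eq_smul_of_isRoot_charpoly h
    exact norm_le_one_of_mulVec_eq_smul hS hv hlam
  · obtain ⟨v, hv, hlam⟩ := exists_mulVec_eq_smul_of_isRoot_charpoly h
    exact (norm_le_one_of_mulVec_eq_smul hS hv hlam).lt_of_ne
      fun h1 => hne (eq_one_of_mulVec_eq_smul_of_norm_eq_one hS hpos hv hlam h1)

/-- Eigenvalues over `ℂ` of `B_c` (the roots of its characteristic polynomial) all lie in
the closed unit disc, the eigenvalue `1` is simple, and every other eigenvalue has
absolute value `< 1`. -/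
theorem stmt_8 {m : ℕ} (hm : 2 ≤ m) (a : Fin m → Fin m → ℝ)
    (ha : ∀ i j, a i j ∈ Set.Icc (0 : ℝ) 1) (hapos : ∀ i j, 0 < a i j)
    (c : Fin m → ℝ) (hc : c ∈ stdSimplex ℝ (Fin m)) (hcpos : ∀ i, 0 < c i) :
    (∀ lam : ℂ, (((Bmat a c).map Complex.ofReal).charpoly).IsRoot lam →
      ‖lam‖ ≤ 1) ∧
    (((Bmat a c).map Complex.ofReal).charpoly).rootMultiplicity 1 = 1 ∧
    (∀ lam : ℂ, (((Bmat a c).map Complex.ofReal).charpoly).IsRoot lam → lam ≠ 1 →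
      ‖lam‖ < 1) :=
  stmt_8_general a ha hapos c hc hcpos
end

section
/- Let m = 3 and a, b ∈ (0,1], with coefficients a_{12} = a_{21} = a and a_{13} = a_{31} = a_{23} = a_{32} = b, and let c = (α, β, γ) ∈ S^2 (so α + β + γ = 1). Then the matrix B_c, namely the 3×3 matrix with rows (1 − aβ − bγ, aα, bα), (aβ, 1 − aα − bγ, bβ), (bγ, bγ, 1 − bα − bβ), has characteristic polynomial whose roots (eigenvalues) are λ_1 = 1, λ_2 = 1 − b, and λ_3 = 1 − a + (a − b)γ. -/
open Matrix Polynomial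

-- Every column sums to `1` (the matrix is column-stochastic for nonnegative data), whence `λ = 1`.
theorem charpoly_of_stochastic_fin_three {R : Type*} [CommRing R] (a b α β γ : R)
    (hsum : α + β + γ = 1) :
    (!![1 - a * β - b * γ, a * α, b * α;
        a * β, 1 - a * α - b * γ, b * β;
        b * γ, b * γ, 1 - b * α - b * β]).charpoly =
      (X - C 1) * (X - C (1 - b)) * (X - C (1 - a + (a - b) * γ)) := by
  obtain rfl : α = 1 - β - γ := by rw [← hsum]; ring
  rw [Matrix.charpoly, Matrix.det_fin_three]
  simp only [charmatrix_apply_eq, charmatrix_apply_ne, of_apply, cons_val', cons_val_zero,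
    cons_val_one, cons_val, cons_val_fin_one, ne_eq, Fin.reduceEq, not_false_eq_true,
    zero_ne_one, one_ne_zero, map_add, map_sub, map_one, map_mul, mul_neg, neg_mul, neg_neg]
  ring

theorem stmt_9_general (a b : ℝ) (α β γ : ℝ) (hsum : α + β + γ = 1) :
    (Matrix.of
      !![1 - a * β - b * γ, a * α, b * α;
         a * β, 1 - a * α - b * γ, b * β;
         b * γ, b * γ, 1 - b * α - b * β]).charpoly =
      (X - C 1) * (X - C (1 - b)) * (X - C (1 - a + (a - b) * γ)) :=
  charpoly_of_stochastic_fin_three a b α β γ hsum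

/-- In the `m = 3` example, the matrix `B_c` has eigenvalues `1`, `1 - b` and
`1 - a + (a - b)γ`: its characteristic polynomial factors accordingly. -/
theorem stmt_9 (a b : ℝ) (ha : a ∈ Set.Ioc (0 : ℝ) 1) (hb : b ∈ Set.Ioc (0 : ℝ) 1)
    (α β γ : ℝ) (hα : 0 ≤ α) (hβ : 0 ≤ β) (hγ : 0 ≤ γ) (hsum : α + β + γ = 1) :
    (Matrix.of
      !![1 - a * β - b * γ, a * α, b * α;
         a * β, 1 - a * α - b * γ, b * β;
         b * γ, b * γ, 1 - b * α - b * β]).charpoly =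
      (X - C 1) * (X - C (1 - b)) * (X - C (1 - a + (a - b) * γ)) :=
  stmt_9_general a b α β γ hsum
end

section
/- If a_{ij} > 0 for all 1 ≤ i,j ≤ m and c ∈ S^{m-1} with c_i > 0 for all i, then the powers B_c^n converge as n → ∞ to a rank-one projection: there exists a vector w ∈ ℝ^m with w positive and Σ_{i=1}^m w_i c_i = 1 such that lim_{n→∞} B_c^n = c w^T (entrywise convergence of matrices); consequently, for every u^{(0)} ∈ ℝ^m, lim_{n→∞} B_c^n (u^{(0)})^T = (w · u^{(0)}) c^T. -/
/-!
`B_c` has positive entries and fixes `c`, so conjugating it by `diagonal c` gives a positive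
row-stochastic matrix `P`. If `ε > 0` is the least entry of `P`, the minimum of `P ^ n *ᵥ x`
increases with `n` while its oscillation shrinks by the factor `1 - ε` at each step, so `P ^ n`
converges to a matrix whose rows all equal a positive probability vector `q`. Undoing the
conjugation gives `B_c ^ n → c wᵀ` with `w k = q k / c k`.
-/

open Finset Matrix Filter

namespace Matrix

variable {ι : Type*} [Fintype ι] [DecidableEq ι] {P : Matrix ι ι ℝ}

lemma le_mulVec_apply_of_mem_rowStochastic (hP : P ∈ rowStochastic ℝ ι) {x : ι → ℝ} {b : ℝ}
    (hx : ∀ k, b ≤ x k) (i : ι) : b ≤ (P *ᵥ x) i :=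
  calc b = ∑ k, P i k * b := by rw [← sum_mul, sum_row_of_mem_rowStochastic hP, one_mul]
    _ ≤ (P *ᵥ x) i := sum_le_sum fun k _ =>
      mul_le_mul_of_nonneg_left (hx k) (nonneg_of_mem_rowStochastic hP)

lemma mulVec_apply_le_sub_of_mem_rowStochastic (hP : P ∈ rowStochastic ℝ ι) {x : ι → ℝ} {b : ℝ}
    (hx : ∀ k, x k ≤ b) (i k : ι) : (P *ᵥ x) i ≤ b - P i k * (b - x k) := by
  have hdefect : (P *ᵥ x) i = b - ∑ j, P i j * (b - x j) := by
    simp only [mul_sub, sum_sub_distrib, ← sum_mul, sum_row_of_mem_rowStochastic hP, one_mul,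
      sub_sub_cancel, mulVec, dotProduct]
  rw [hdefect]
  gcongr
  exact single_le_sum (f := fun j => P i j * (b - x j))
    (fun j _ => mul_nonneg (nonneg_of_mem_rowStochastic hP) (sub_nonneg.2 (hx j))) (mem_univ k)

lemma mulVec_apply_le_of_mem_rowStochastic (hP : P ∈ rowStochastic ℝ ι) {x : ι → ℝ} {b : ℝ}
    (hx : ∀ k, x k ≤ b) (i : ι) : (P *ᵥ x) i ≤ b :=
  (mulVec_apply_le_sub_of_mem_rowStochastic hP hx i i).trans <|
    sub_le_self _ (mul_nonneg (nonneg_of_mem_rowStochastic hP) (sub_nonneg.2 (hx i)))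

variable [Nonempty ι]

lemma inf'_le_inf'_mulVec (hP : P ∈ rowStochastic ℝ ι) (x : ι → ℝ) :
    univ.inf' univ_nonempty x ≤ univ.inf' univ_nonempty (P *ᵥ x) :=
  le_inf' _ _ fun i _ => le_mulVec_apply_of_mem_rowStochastic hP (fun k => inf'_le _ (mem_univ k)) i

lemma sup'_sub_inf'_mulVec_le (hP : P ∈ rowStochastic ℝ ι) {ε : ℝ} (hε : ∀ i j, ε ≤ P i j)
    (x : ι → ℝ) :
    univ.sup' univ_nonempty (P *ᵥ x) - univ.inf' univ_nonempty (P *ᵥ x) ≤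
      (1 - ε) * (univ.sup' univ_nonempty x - univ.inf' univ_nonempty x) := by
  obtain ⟨k, -, hk⟩ := exists_mem_eq_inf' univ_nonempty x
  have hsup : univ.sup' univ_nonempty (P *ᵥ x) ≤
      univ.sup' univ_nonempty x - ε * (univ.sup' univ_nonempty x - univ.inf' univ_nonempty x) := by
    refine sup'_le _ _ fun i _ => ?_
    refine (mulVec_apply_le_sub_of_mem_rowStochastic hP (b := univ.sup' univ_nonempty x)
      (fun j => le_sup' x (mem_univ j)) i k).trans ?_
    rw [← hk]
    gcongr
    · exact sub_nonneg.2 ((inf'_le _ (mem_univ k)).trans (le_sup' _ (mem_univ k)))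
    · exact hε i k
  linarith [inf'_le_inf'_mulVec hP x]

lemma exists_tendsto_pow_mulVec_const (hP : P ∈ rowStochastic ℝ ι) {ε : ℝ} (hε₀ : 0 < ε)
    (hε : ∀ i j, ε ≤ P i j) (x : ι → ℝ) :
    ∃ L, Tendsto (fun n => P ^ n *ᵥ x) atTop (nhds fun _ => L) := by
  obtain ⟨i₀⟩ := ‹Nonempty ι›
  set lo := fun n : ℕ => univ.inf' univ_nonempty (P ^ n *ᵥ x)
  set hi := fun n : ℕ => univ.sup' univ_nonempty (P ^ n *ᵥ x)
  have hstep (n : ℕ) : P ^ (n + 1) *ᵥ x = P *ᵥ (P ^ n *ᵥ x) := by rw [pow_succ', mulVec_mulVec]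
  have hlo_mono : Monotone lo := monotone_nat_of_le_succ fun n => by
    simp only [lo, hstep]
    exact inf'_le_inf'_mulVec hP _
  have hlo_bdd : BddAbove (Set.range lo) := ⟨univ.sup' univ_nonempty x, by
    rintro _ ⟨n, rfl⟩
    exact (inf'_le _ (mem_univ i₀)).trans (mulVec_apply_le_of_mem_rowStochastic (pow_mem hP n)
      (fun k => le_sup' x (mem_univ k)) i₀)⟩
  have hε₁ : 0 ≤ 1 - ε := sub_nonneg.2 ((hε i₀ i₀).trans (le_one_of_mem_rowStochastic hP))
  have hosc (n : ℕ) : hi n - lo n ≤ (1 - ε) ^ n * (hi 0 - lo 0) := by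
    induction n with
    | zero => simp
    | succ n ih =>
      calc hi (n + 1) - lo (n + 1) ≤ (1 - ε) * (hi n - lo n) := by
            simp only [hi, lo, hstep]
            exact sup'_sub_inf'_mulVec_le hP hε _
        _ ≤ (1 - ε) ^ (n + 1) * (hi 0 - lo 0) := by
            rw [pow_succ', mul_assoc]
            gcongr
  have hlo_lim := tendsto_atTop_ciSup hlo_mono hlo_bdd
  have hhi_lim : Tendsto (fun n => lo n + (1 - ε) ^ n * (hi 0 - lo 0)) atTop
      (nhds (⨆ n, lo n)) := by
    simpa using hlo_lim.add ((tendsto_pow_atTop_nhds_zero_of_lt_one hε₁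
      (by linarith)).mul_const (hi 0 - lo 0))
  refine ⟨⨆ n, lo n, tendsto_pi_nhds.2 fun i =>
    tendsto_of_tendsto_of_tendsto_of_le_of_le hlo_lim hhi_lim (fun n => inf'_le _ (mem_univ i))
      fun n => ?_⟩
  linarith [hosc n, le_sup' (P ^ n *ᵥ x) (mem_univ i)]

theorem exists_tendsto_pow_of_mem_rowStochastic (hP : P ∈ rowStochastic ℝ ι)
    (hpos : ∀ i j, 0 < P i j) :
    ∃ q : ι → ℝ, (∀ k, 0 < q k) ∧ ∑ k, q k = 1 ∧
      Tendsto (fun n => P ^ n) atTop (nhds (of fun _ k => q k)) := by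
  obtain ⟨i₀⟩ := ‹Nonempty ι›
  obtain ⟨⟨i₁, j₁⟩, hmin⟩ := Finite.exists_min fun p : ι × ι => P p.1 p.2
  have hε (i j : ι) : P i₁ j₁ ≤ P i j := hmin (i, j)
  choose q hq using fun k =>
    exists_tendsto_pow_mulVec_const hP (hpos i₁ j₁) hε (Pi.single k 1)
  have hentry (i k : ι) : Tendsto (fun n => (P ^ n) i k) atTop (nhds (q k)) := by
    simpa [mulVec_single_one] using tendsto_pi_nhds.1 (hq k) i
  refine ⟨q, fun k => ?_, ?_, tendsto_pi_nhds.2 fun i => tendsto_pi_nhds.2 (hentry i)⟩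
  · -- each entry of `P ^ (n + 1) = P ^ n * P` averages column `k` of `P`
    refine (hpos i₁ j₁).trans_le (ge_of_tendsto ((hentry i₀ k).comp (tendsto_add_atTop_nat 1))
      (Eventually.of_forall fun n => ?_))
    rw [Function.comp_apply, pow_succ]
    exact le_mulVec_apply_of_mem_rowStochastic (pow_mem hP n) (fun j => hε j k) i₀
  · refine tendsto_nhds_unique (tendsto_finsetSum _ fun k _ => hentry i₀ k) ?_
    simp only [sum_row_of_mem_rowStochastic (pow_mem hP _), tendsto_const_nhds]

theorem exists_tendsto_pow_of_mulVec_eq_self {B : Matrix ι ι ℝ} {c : ι → ℝ}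
    (hB : ∀ i k, 0 < B i k) (hc : ∀ i, 0 < c i) (hBc : B *ᵥ c = c) :
    ∃ w : ι → ℝ, (∀ k, 0 < w k) ∧ ∑ k, w k * c k = 1 ∧
      Tendsto (fun n => B ^ n) atTop (nhds (of fun i k => c i * w k)) := by
  set P := diagonal c⁻¹ * B * diagonal c
  have hPapply (i k : ι) : P i k = (c i)⁻¹ * B i k * c k := by simp [P, diagonal_mul, mul_diagonal]
  have hPpos (i k : ι) : 0 < P i k := by
    rw [hPapply]
    exact mul_pos (mul_pos (inv_pos.2 (hc i)) (hB i k)) (hc k)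
  have hc1 : diagonal c *ᵥ 1 = c := by
    ext i
    simp [mulVec_diagonal]
  have hP : P ∈ rowStochastic ℝ ι := mem_rowStochastic.2 ⟨fun i k => (hPpos i k).le, by
    ext i
    simp [P, ← mulVec_mulVec, hc1, hBc, mulVec_diagonal, (hc i).ne']⟩
  obtain ⟨q, hq, hq1, hlim⟩ := exists_tendsto_pow_of_mem_rowStochastic hP hPpos
  have hcc : diagonal c * diagonal c⁻¹ = 1 := by
    simp [diagonal_mul_diagonal, fun i => mul_inv_cancel₀ (hc i).ne']
  have hpow (n : ℕ) : B ^ n = diagonal c * P ^ n * diagonal c⁻¹ := by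
    have hconj : SemiconjBy (diagonal c) P B := by
      simp only [SemiconjBy, P, ← mul_assoc, hcc, one_mul]
    rw [(hconj.pow_right n).eq, mul_assoc, hcc, mul_one]
  refine ⟨fun k => q k / c k, fun k => div_pos (hq k) (hc k), by
    simpa [div_mul_cancel₀ _ (hc _).ne'] using hq1, ?_⟩
  simp_rw [hpow]
  convert (tendsto_const_nhds.mul hlim).mul (tendsto_const_nhds (x := diagonal c⁻¹)) using 2
  ext i k
  simp [diagonal_mul, mul_diagonal, div_eq_mul_inv, mul_assoc]

end Matrix

section Bmat

variable {m : ℕ} (a : Fin m → Fin m → ℝ) (c : Fin m → ℝ)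

lemma Bmat_mulVec_self : Bmat a c *ᵥ c = c := by
  ext i
  have hoff : ∀ k ∈ univ.erase i, Bmat a c i k * c k = c i * (a i k * c k) := fun k hk => by
    rw [Bmat, of_apply, if_neg (ne_of_mem_erase hk).symm, mul_assoc]
  rw [mulVec, dotProduct, ← add_sum_erase _ _ (mem_univ i), sum_congr rfl hoff, ← mul_sum, Bmat,
    of_apply, if_pos rfl]
  ring

variable {a c}

lemma Bmat_pos (ha : ∀ i j, a i j ≤ 1) (hapos : ∀ i j, 0 < a i j) (hc : ∑ i, c i = 1)
    (hcpos : ∀ i, 0 < c i) (i k : Fin m) : 0 < Bmat a c i k := by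
  rw [Bmat, of_apply]
  split_ifs with hik
  · refine sub_pos.2 ?_
    calc ∑ j ∈ univ.erase i, a i j * c j ≤ ∑ j ∈ univ.erase i, c j :=
          sum_le_sum fun j _ => mul_le_of_le_one_left (hcpos j).le (ha i j)
      _ = 1 - c i := by rw [sum_erase_eq_sub (mem_univ i), hc]
      _ < 1 := sub_lt_self 1 (hcpos i)
  · exact mul_pos (hcpos i) (hapos i k)

end Bmat

theorem stmt_15_general {m : ℕ} (a : Fin m → Fin m → ℝ)
    (ha : ∀ i j, a i j ∈ Set.Icc (0 : ℝ) 1) (hapos : ∀ i j, 0 < a i j)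
    (c : Fin m → ℝ) (hc : c ∈ stdSimplex ℝ (Fin m)) (hcpos : ∀ i, 0 < c i) :
    ∃ w : Fin m → ℝ, (∀ i, 0 < w i) ∧ (∑ i, w i * c i = 1) ∧
      Tendsto (fun n : ℕ => (Bmat a c) ^ n) atTop
        (nhds (Matrix.of fun i k => c i * w k)) ∧
      ∀ u0 : Fin m → ℝ,
        Tendsto (fun n : ℕ => ((Bmat a c) ^ n) *ᵥ u0) atTop
          (nhds fun i => (∑ k, w k * u0 k) * c i) := by
  have : Nonempty (Fin m) := by
    obtain ⟨i, -⟩ := exists_ne_zero_of_sum_ne_zero (hc.2.symm ▸ one_ne_zero)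
    exact ⟨i⟩
  obtain ⟨w, hw, hwc, hlim⟩ := exists_tendsto_pow_of_mulVec_eq_self
    (Bmat_pos (fun i j => (ha i j).2) hapos hc.2 hcpos) hcpos (Bmat_mulVec_self a c)
  refine ⟨w, hw, hwc, hlim, fun u0 => ?_⟩
  have hrank_one : (of fun i k => c i * w k) *ᵥ u0 = fun i => (∑ k, w k * u0 k) * c i := by
    ext i
    simp only [mulVec, dotProduct, of_apply, sum_mul]
    exact sum_congr rfl fun k _ => by ring
  rw [← hrank_one]
  exact ((continuous_id.matrix_mulVec (continuous_const (y := u0))).tendsto _).comp hlim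

/-- The powers `B_c^n` converge to the Perron projection `c wᵀ`, a rank-one matrix;
consequently `B_c^n u⁰ → (w · u⁰) c`. -/
theorem stmt_15 {m : ℕ} (hm : 2 ≤ m) (a : Fin m → Fin m → ℝ)
    (ha : ∀ i j, a i j ∈ Set.Icc (0 : ℝ) 1) (hapos : ∀ i j, 0 < a i j)
    (c : Fin m → ℝ) (hc : c ∈ stdSimplex ℝ (Fin m)) (hcpos : ∀ i, 0 < c i) :
    ∃ w : Fin m → ℝ, (∀ i, 0 < w i) ∧ (∑ i, w i * c i = 1) ∧
      Tendsto (fun n : ℕ => (Bmat a c) ^ n) atTop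
        (nhds (Matrix.of fun i k => c i * w k)) ∧
      ∀ u0 : Fin m → ℝ,
        Tendsto (fun n : ℕ => ((Bmat a c) ^ n) *ᵥ u0) atTop
          (nhds fun i => (∑ k, w k * u0 k) * c i) :=
  stmt_15_general a ha hapos c hc hcpos
end

section
/- Suppose a_{ij} > 0 for all 1 ≤ i,j ≤ m. For any c ∈ S^{m-1} with c_i > 0 for all i and any initial point t^{(0)} = (u_1^{(0)}, c_1 − u_1^{(0)}, …, u_m^{(0)}, c_m − u_m^{(0)}) ∈ I_c, the trajectory W^n(t^{(0)}) converges as n → ∞, and its limit has the form (βc_1, c_1(1−β), βc_2, c_2(1−β), …, βc_m, c_m(1−β)) for some real number β = β(t^{(0)}) (the coefficient of the Perron projection of u^{(0)} onto the line {rc : r ∈ ℝ}). -/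
open Finset Filter

/-- The set `I_c = {x ∈ S^{2m-1} : x_{2i-1} + x_{2i} = c_i }`. -/
def Ic {m : ℕ} (c : Fin m → ℝ) : Set (Fin m → ℝ × ℝ) :=
  {x | x ∈ pairSimplex m ∧ ∀ i, (x i).1 + (x i).2 = c i}

/-- Weight matrix of the linearized dynamics in ratio coordinates. -/
noncomputable def wgt {m : ℕ} (a : Fin m → Fin m → ℝ) (c : Fin m → ℝ) (i j : Fin m) : ℝ :=
  (if j = i then 1 - ∑ k, a i k * c k else 0) + a i j * c j

/-- The linearized dynamics on ratio coordinates. -/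
noncomputable def Tm {m : ℕ} (a : Fin m → Fin m → ℝ) (c : Fin m → ℝ) (r : Fin m → ℝ) :
    Fin m → ℝ := fun i => ∑ j, wgt a c i j * r j

lemma wgt_sum {m : ℕ} (a : Fin m → Fin m → ℝ) (c : Fin m → ℝ) (i : Fin m) :
    ∑ j, wgt a c i j = 1 := by
  unfold wgt
  rw [Finset.sum_add_distrib, Finset.sum_ite_eq' univ i (fun _ => 1 - ∑ k, a i k * c k)]
  simp

lemma Tm_eq {m : ℕ} (a : Fin m → Fin m → ℝ) (c : Fin m → ℝ) (r : Fin m → ℝ) (i : Fin m) :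
    Tm a c r i = r i + ∑ j, a i j * c j * (r j - r i) := by
  unfold Tm wgt
  have e1 : ∀ j, ((if j = i then 1 - ∑ k, a i k * c k else 0) + a i j * c j) * r j
      = (if j = i then (1 - ∑ k, a i k * c k) * r j else 0) + a i j * c j * r j := fun j => by
    split <;> ring
  rw [Finset.sum_congr rfl fun j _ => e1 j, Finset.sum_add_distrib,
    Finset.sum_ite_eq' univ i fun j => (1 - ∑ k, a i k * c k) * r j, if_pos (mem_univ i)]
  have e2 : (∑ j, a i j * c j * (r j - r i)) = (∑ j, a i j * c j * r j) - (∑ j, a i j * c j) * r i := by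
    rw [Finset.sum_mul, ← Finset.sum_sub_distrib]
    exact Finset.sum_congr rfl fun j _ => by ring
  rw [e2]
  ring

lemma W_ratio {m : ℕ} (a : Fin m → Fin m → ℝ) (c : Fin m → ℝ) (s : Fin m → ℝ) :
    W a (fun i => (c i * s i, c i - c i * s i)) =
      fun i => (c i * Tm a c s i, c i - c i * Tm a c s i) := by
  funext i
  have hb : ∑ j, a i j * ((c i - c i * s i) * (c j * s j) - (c i * s i) * (c j - c j * s j)) =
      c i * ∑ j, a i j * c j * (s j - s i) := by
    rw [Finset.mul_sum]
    exact Finset.sum_congr rfl fun j _ => by ring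
  unfold W
  simp only
  rw [hb, Tm_eq]
  rw [Prod.mk.injEq]
  exact ⟨by ring, by ring⟩

/-- Convex combination with weights `≥ δ` is at most `sup - δ * (sup - inf)`. -/
lemma combo_upper {m : ℕ} (hne : (univ : Finset (Fin m)).Nonempty) {δ : ℝ} (hδ : 0 ≤ δ)
    (w r : Fin m → ℝ) (hw : ∀ j, δ ≤ w j) (hsum : ∑ j, w j = 1) :
    ∑ j, w j * r j ≤
      univ.sup' hne r - δ * (univ.sup' hne r - univ.inf' hne r) := by
  obtain ⟨j0, -, hj0⟩ := Finset.exists_mem_eq_inf' hne r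
  have h0 : ∀ j, (0:ℝ) ≤ w j := fun j => le_trans hδ (hw j)
  have hsplit : ∑ j, w j * r j = w j0 * r j0 + ∑ j ∈ univ.erase j0, w j * r j :=
    (Finset.add_sum_erase _ _ (mem_univ j0)).symm
  have h2 : ∑ j ∈ univ.erase j0, w j * r j ≤
      (∑ j ∈ univ.erase j0, w j) * univ.sup' hne r := by
    rw [Finset.sum_mul]
    exact Finset.sum_le_sum fun j _ =>
      mul_le_mul_of_nonneg_left (Finset.le_sup' r (mem_univ j)) (h0 j)
  have h3 : ∑ j ∈ univ.erase j0, w j = 1 - w j0 := by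
    rw [Finset.sum_erase_eq_sub (mem_univ j0), hsum]
  rw [h3] at h2
  have h4 : univ.inf' hne r ≤ univ.sup' hne r :=
    le_trans (Finset.inf'_le _ (mem_univ j0)) (Finset.le_sup' _ (mem_univ j0))
  have h5 : δ ≤ w j0 := hw j0
  nlinarith [mul_nonneg (sub_nonneg.2 h5) (sub_nonneg.2 h4)]

lemma combo_lower {m : ℕ} (hne : (univ : Finset (Fin m)).Nonempty) {δ : ℝ} (hδ : 0 ≤ δ)
    (w r : Fin m → ℝ) (hw : ∀ j, δ ≤ w j) (hsum : ∑ j, w j = 1) :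
    univ.inf' hne r + δ * (univ.sup' hne r - univ.inf' hne r) ≤ ∑ j, w j * r j := by
  obtain ⟨j1, -, hj1⟩ := Finset.exists_mem_eq_sup' hne r
  have h0 : ∀ j, (0:ℝ) ≤ w j := fun j => le_trans hδ (hw j)
  have hsplit : ∑ j, w j * r j = w j1 * r j1 + ∑ j ∈ univ.erase j1, w j * r j :=
    (Finset.add_sum_erase _ _ (mem_univ j1)).symm
  have h2 : (∑ j ∈ univ.erase j1, w j) * univ.inf' hne r ≤
      ∑ j ∈ univ.erase j1, w j * r j := by
    rw [Finset.sum_mul]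
    exact Finset.sum_le_sum fun j _ =>
      mul_le_mul_of_nonneg_left (Finset.inf'_le r (mem_univ j)) (h0 j)
  have h3 : ∑ j ∈ univ.erase j1, w j = 1 - w j1 := by
    rw [Finset.sum_erase_eq_sub (mem_univ j1), hsum]
  rw [h3] at h2
  have h4 : univ.inf' hne r ≤ univ.sup' hne r :=
    le_trans (Finset.inf'_le _ (mem_univ j1)) (Finset.le_sup' _ (mem_univ j1))
  have h5 : δ ≤ w j1 := hw j1
  nlinarith [mul_nonneg (sub_nonneg.2 h5) (sub_nonneg.2 h4)]

/-- Any trajectory of `W` starting in `I_c` converges to a point of the form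
`(βc_1, c_1(1-β), …, βc_m, c_m(1-β))`. -/
theorem stmt_16 {m : ℕ} (hm : 2 ≤ m) (a : Fin m → Fin m → ℝ)
    (ha : ∀ i j, a i j ∈ Set.Icc (0 : ℝ) 1) (hapos : ∀ i j, 0 < a i j)
    (c : Fin m → ℝ) (hc : c ∈ stdSimplex ℝ (Fin m)) (hcpos : ∀ i, 0 < c i)
    (u0 : Fin m → ℝ) (t0 : Fin m → ℝ × ℝ)
    (ht0def : t0 = fun i => (u0 i, c i - u0 i)) (ht0 : t0 ∈ Ic c) :
    ∃ β : ℝ, Tendsto (fun n : ℕ => (W a)^[n] t0) atTop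
      (nhds fun i => ((β * c i, c i * (1 - β)) : ℝ × ℝ)) := by
  haveI : NeZero m := ⟨by omega⟩
  have hne : (univ : Finset (Fin m)).Nonempty := univ_nonempty
  have hne2 : ((univ : Finset (Fin m)) ×ˢ (univ : Finset (Fin m))).Nonempty :=
    hne.product hne
  -- the trajectory of ratios
  set r : ℕ → Fin m → ℝ := fun n => (Tm a c)^[n] (fun i => u0 i / c i) with hr
  have hsucc : ∀ n, r (n + 1) = Tm a c (r n) := fun n => Function.iterate_succ_apply' _ _ _
  -- iterate formula
  have hiter : ∀ n, (W a)^[n] t0 = fun i => (c i * r n i, c i - c i * r n i) := by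
    intro n
    induction n with
    | zero =>
      funext i
      simp only [Function.iterate_zero, id_eq, ht0def, hr, Function.iterate_zero]
      have : c i * (u0 i / c i) = u0 i := by
        rw [mul_comm, div_mul_cancel₀ _ (hcpos i).ne']
      rw [this]
    | succ n ih =>
      rw [Function.iterate_succ_apply', ih, W_ratio, hsucc]
  -- the uniform positivity constant
  set δ : ℝ := (univ ×ˢ univ).inf' hne2 (fun p : Fin m × Fin m => a p.1 p.2 * c p.2) with hδdef
  have hδpos : 0 < δ := by
    rw [hδdef, Finset.lt_inf'_iff]
    exact fun p _ => mul_pos (hapos p.1 p.2) (hcpos p.2)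
  have hδle : ∀ i j, δ ≤ a i j * c j := by
    intro i j
    exact Finset.inf'_le (fun p : Fin m × Fin m => a p.1 p.2 * c p.2)
      (by simp : ((i, j) : Fin m × Fin m) ∈ univ ×ˢ univ)
  -- weight properties
  have hwpos : ∀ i j, δ ≤ wgt a c i j := by
    intro i j
    unfold wgt
    have h1 : ∑ k, a i k * c k ≤ 1 := by
      calc ∑ k, a i k * c k ≤ ∑ k, c k :=
            Finset.sum_le_sum fun k _ => by
              nlinarith [(ha i k).2, (hc.1 k : 0 ≤ c k), (hcpos k)]
        _ = 1 := hc.2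
    rcases eq_or_ne j i with h | h
    · subst h
      rw [if_pos rfl]
      linarith [hδle j j]
    · simp only [if_neg h, zero_add]
      exact hδle i j
  -- sup and inf sequences
  set Mx : ℕ → ℝ := fun n => univ.sup' hne (r n) with hMx
  set mn : ℕ → ℝ := fun n => univ.inf' hne (r n) with hmn
  have hgap : ∀ n, mn n ≤ Mx n := fun n => by
    obtain ⟨i⟩ := (inferInstance : Nonempty (Fin m))
    exact le_trans (Finset.inf'_le _ (mem_univ i)) (Finset.le_sup' _ (mem_univ i))
  have hup : ∀ n i, r (n + 1) i ≤ Mx n - δ * (Mx n - mn n) := by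
    intro n i
    rw [hsucc]
    exact combo_upper hne hδpos.le (wgt a c i) (r n) (hwpos i) (wgt_sum a c i)
  have hlo : ∀ n i, mn n + δ * (Mx n - mn n) ≤ r (n + 1) i := by
    intro n i
    rw [hsucc]
    exact combo_lower hne hδpos.le (wgt a c i) (r n) (hwpos i) (wgt_sum a c i)
  have hMup : ∀ n, Mx (n + 1) ≤ Mx n - δ * (Mx n - mn n) := fun n =>
    Finset.sup'_le _ _ fun i _ => hup n i
  have hmlo : ∀ n, mn n + δ * (Mx n - mn n) ≤ mn (n + 1) := fun n =>
    Finset.le_inf' _ _ fun i _ => hlo n i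
  have hMant : Antitone Mx := antitone_nat_of_succ_le fun n => by
    have := hMup n; have := hgap n; nlinarith [hδpos]
  have hmmono : Monotone mn := monotone_nat_of_le_succ fun n => by
    have := hmlo n; have := hgap n; nlinarith [hδpos]
  have hbdd : BddBelow (Set.range Mx) := by
    refine ⟨mn 0, ?_⟩
    rintro x ⟨n, rfl⟩
    exact le_trans (hmmono (Nat.zero_le n)) (hgap n)
  set β : ℝ := ⨅ n, Mx n with hβdef
  have hMtend : Tendsto Mx atTop (nhds β) := tendsto_atTop_ciInf hMant hbdd
  -- gap contraction
  set q : ℝ := max (1 - 2 * δ) 0 with hqdef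
  have hq0 : 0 ≤ q := le_max_right _ _
  have hq1 : q < 1 := by
    rw [hqdef, max_lt_iff]
    constructor <;> nlinarith [hδpos]
  have hgapc : ∀ n, Mx (n + 1) - mn (n + 1) ≤ q * (Mx n - mn n) := by
    intro n
    have h1 := hMup n
    have h2 := hmlo n
    have h3 := hgap n
    have h4 : 1 - 2 * δ ≤ q := le_max_left _ _
    nlinarith [mul_le_mul_of_nonneg_right h4 (sub_nonneg.2 h3)]
  have hgapn : ∀ n, Mx n - mn n ≤ q ^ n * (Mx 0 - mn 0) := by
    intro n
    induction n with
    | zero => simp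
    | succ n ih =>
      calc Mx (n + 1) - mn (n + 1) ≤ q * (Mx n - mn n) := hgapc n
        _ ≤ q * (q ^ n * (Mx 0 - mn 0)) := mul_le_mul_of_nonneg_left ih hq0
        _ = q ^ (n + 1) * (Mx 0 - mn 0) := by ring
  have hgap0 : Tendsto (fun n => Mx n - mn n) atTop (nhds 0) := by
    have hpow : Tendsto (fun n : ℕ => q ^ n * (Mx 0 - mn 0)) atTop (nhds 0) := by
      have := (tendsto_pow_atTop_nhds_zero_of_lt_one hq0 hq1).mul_const (Mx 0 - mn 0)
      simpa using this
    exact tendsto_of_tendsto_of_tendsto_of_le_of_le tendsto_const_nhds hpow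
      (fun n => sub_nonneg.2 (hgap n)) hgapn
  have hmtend : Tendsto mn atTop (nhds β) := by
    have := hMtend.sub hgap0
    simpa using this
  -- each coordinate of r converges to β
  have hrtend : ∀ i, Tendsto (fun n => r n i) atTop (nhds β) :=
    fun i => tendsto_of_tendsto_of_tendsto_of_le_of_le hmtend hMtend
      (fun n => Finset.inf'_le _ (mem_univ i)) (fun n => Finset.le_sup' _ (mem_univ i))
  refine ⟨β, ?_⟩
  rw [tendsto_pi_nhds]
  intro i
  have h1 : Tendsto (fun n => c i * r n i) atTop (nhds (β * c i)) := by
    have := (hrtend i).const_mul (c i)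
    simpa [mul_comm] using this
  have h2 : Tendsto (fun n => c i - c i * r n i) atTop (nhds (c i * (1 - β))) := by
    have h := ((hrtend i).const_mul (c i)).const_sub (c i)
    have he : c i - c i * β = c i * (1 - β) := by ring
    rwa [he] at h
  have := h1.prodMk_nhds h2
  simpa [hiter] using this
end

section
/- Suppose a_{ij} > 0 for all 1 ≤ i,j ≤ m. For any initial point t^{(0)} ∈ S^{2m-1} with x^{(0)}_{2i-1} + x^{(0)}_{2i} > 0 for all i, the iterates x^{(n)} = W^n(t^{(0)}) satisfy, for every i = 1,…,m, lim_{n→∞} Σ_{j=1}^m a_{ij}(x^{(n)}_{2i} x^{(n)}_{2j-1} − x^{(n)}_{2i-1} x^{(n)}_{2j}) = 0 (linkage equilibrium in the limit). -/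
open Finset Filter

/-- Linkage equilibrium in the limit: along any trajectory `x^{(n)} = W^n(t⁰)`, the quadratic
terms `∑_j a_{ij}(x^{(n)}_{2i} x^{(n)}_{2j-1} - x^{(n)}_{2i-1} x^{(n)}_{2j})` tend to `0`. -/
theorem stmt_17 {m : ℕ} (hm : 2 ≤ m) (a : Fin m → Fin m → ℝ)
    (ha : ∀ i j, a i j ∈ Set.Icc (0 : ℝ) 1) (hapos : ∀ i j, 0 < a i j)
    (t0 : Fin m → ℝ × ℝ) (ht0 : t0 ∈ pairSimplex m)
    (hpos : ∀ i, 0 < (t0 i).1 + (t0 i).2) :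
    ∀ i, Tendsto
      (fun n : ℕ => ∑ j, a i j *
        (((W a)^[n] t0 i).2 * ((W a)^[n] t0 j).1 -
          ((W a)^[n] t0 i).1 * ((W a)^[n] t0 j).2))
      atTop (nhds 0) := by
  have hm' : 0 < m := by omega
  have him : Nonempty (Fin m) := ⟨⟨0, hm'⟩⟩
  obtain ⟨hnn0, htot0⟩ := ht0
  set s : Fin m → ℝ := fun i => (t0 i).1 + (t0 i).2 with hsdef
  have hs : ∀ i, 0 < s i := hpos
  have hssum : ∑ i, s i = 1 := htot0
  set x : ℕ → Fin m → ℝ × ℝ := fun n => (W a)^[n] t0 with hxdef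
  have hxsucc : ∀ n, x (n + 1) = W a (x n) := fun n =>
    Function.iterate_succ_apply' (W a) n t0
  -- pair sums are invariant
  have hsum : ∀ n i, (x n i).1 + (x n i).2 = s i := by
    intro n
    induction n with
    | zero => intro i; rfl
    | succ n ih =>
      intro i
      rw [hxsucc]
      simp only [W]
      linarith [ih i]
  -- nonnegativity of all coordinates
  have hnn : ∀ n i, 0 ≤ (x n i).1 ∧ 0 ≤ (x n i).2 := by
    intro n
    induction n with
    | zero => exact hnn0
    | succ n ih =>
      intro i
      have h2sum : ∑ j, (x n j).2 ≤ 1 := by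
        rw [← hssum]
        exact Finset.sum_le_sum fun j _ => by linarith [(ih j).1, hsum n j]
      have h1sum : ∑ j, (x n j).1 ≤ 1 := by
        rw [← hssum]
        exact Finset.sum_le_sum fun j _ => by linarith [(ih j).2, hsum n j]
      have ha2 : ∑ j, a i j * (x n j).2 ≤ 1 :=
        le_trans (Finset.sum_le_sum fun j _ => by
          nlinarith [(ha i j).1, (ha i j).2, (ih j).2]) h2sum
      have ha1 : ∑ j, a i j * (x n j).1 ≤ 1 :=
        le_trans (Finset.sum_le_sum fun j _ => by
          nlinarith [(ha i j).1, (ha i j).2, (ih j).1]) h1sum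
      have ha2n : 0 ≤ ∑ j, a i j * (x n j).2 :=
        Finset.sum_nonneg fun j _ => mul_nonneg (ha i j).1 (ih j).2
      have ha1n : 0 ≤ ∑ j, a i j * (x n j).1 :=
        Finset.sum_nonneg fun j _ => mul_nonneg (ha i j).1 (ih j).1
      have hexp : ∑ j, a i j * ((x n i).2 * (x n j).1 - (x n i).1 * (x n j).2)
          = (x n i).2 * ∑ j, a i j * (x n j).1 - (x n i).1 * ∑ j, a i j * (x n j).2 := by
        rw [Finset.mul_sum, Finset.mul_sum, ← Finset.sum_sub_distrib]
        exact Finset.sum_congr rfl fun j _ => by ring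
      rw [hxsucc]
      simp only [W]
      rw [hexp]
      constructor
      · nlinarith [mul_nonneg (ih i).2 ha1n,
          mul_nonneg (ih i).1 (by linarith : (0:ℝ) ≤ 1 - ∑ j, a i j * (x n j).2)]
      · nlinarith [mul_nonneg (ih i).1 ha2n,
          mul_nonneg (ih i).2 (by linarith : (0:ℝ) ≤ 1 - ∑ j, a i j * (x n j).1)]
  -- the ratios
  set r : ℕ → Fin m → ℝ := fun n i => (x n i).1 / s i with hrdef
  have hx1 : ∀ n i, (x n i).1 = r n i * s i := fun n i => by
    rw [hrdef]
    rw [div_mul_cancel₀ _ (hs i).ne']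
  have hx2 : ∀ n i, (x n i).2 = (1 - r n i) * s i := fun n i => by
    rw [sub_mul, one_mul, ← hx1]
    linarith [hsum n i]
  have hr0 : ∀ n i, 0 ≤ r n i := fun n i => div_nonneg (hnn n i).1 (hs i).le
  have hr1 : ∀ n i, r n i ≤ 1 := fun n i => by
    rw [hrdef]
    rw [div_le_one (hs i)]
    linarith [(hnn n i).2, hsum n i]
  -- the linear recurrence for r
  have hrec : ∀ n i, r (n + 1) i = r n i + ∑ j, a i j * s j * (r n j - r n i) := by
    intro n i
    have hterm : ∀ j, a i j * ((x n i).2 * (x n j).1 - (x n i).1 * (x n j).2)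
        = a i j * s j * (r n j - r n i) * s i := fun j => by
      rw [hx1 n i, hx1 n j, hx2 n i, hx2 n j]
      ring
    have h1 : (x (n + 1) i).1
        = (r n i + ∑ j, a i j * s j * (r n j - r n i)) * s i := by
      rw [hxsucc]
      simp only [W]
      rw [Finset.sum_congr rfl fun j _ => hterm j, ← Finset.sum_mul, hx1 n i]
      ring
    have : r (n + 1) i = (x (n + 1) i).1 / s i := rfl
    rw [this, h1, mul_div_cancel_right₀ _ (hs i).ne']
  -- sup and inf
  have hune : (univ : Finset (Fin m)).Nonempty := univ_nonempty
  set Mx : ℕ → ℝ := fun n => univ.sup' hune (r n) with hMxdef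
  set mn : ℕ → ℝ := fun n => univ.inf' hune (r n) with hmndef
  have hle : ∀ n i, r n i ≤ Mx n := fun n i => Finset.le_sup' _ (mem_univ i)
  have hge : ∀ n i, mn n ≤ r n i := fun n i => Finset.inf'_le _ (mem_univ i)
  have hosc0 : ∀ n, 0 ≤ Mx n - mn n := fun n => by
    obtain ⟨i⟩ := him
    linarith [hle n i, hge n i]
  -- the uniform lower bound ε
  have hpne : (univ : Finset (Fin m × Fin m)).Nonempty := univ_nonempty
  set ε : ℝ := (univ : Finset (Fin m × Fin m)).inf' hpne
      (fun p => a p.1 p.2 * s p.2) with hεdef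
  have hεle : ∀ i j, ε ≤ a i j * s j := fun i j =>
    Finset.inf'_le _ (mem_univ (i, j))
  have hεpos : 0 < ε := by
    rw [hεdef, Finset.lt_inf'_iff]
    exact fun p _ => mul_pos (hapos p.1 p.2) (hs p.2)
  have hB1 : ∀ i, ∑ j, a i j * s j ≤ 1 := fun i => by
    rw [← hssum]
    exact Finset.sum_le_sum fun j _ => by nlinarith [(ha i j).2, hs j]
  have hε2 : 2 * ε ≤ 1 := by
    obtain ⟨i⟩ := him
    have h1 : (m : ℝ) * ε ≤ ∑ j, a i j * s j := by
      calc (m : ℝ) * ε = ∑ _j : Fin m, ε := by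
            rw [Finset.sum_const, card_univ, Fintype.card_fin, nsmul_eq_mul]
        _ ≤ _ := Finset.sum_le_sum fun j _ => hεle i j
    have h2 : (2 : ℝ) ≤ m := by exact_mod_cast hm
    nlinarith [hB1 i, hεpos]
  -- the contraction step
  have hstep : ∀ n i, r (n + 1) i ≤ Mx n - ε * (Mx n - mn n) ∧
      mn n + ε * (Mx n - mn n) ≤ r (n + 1) i := by
    intro n i
    obtain ⟨j0, -, hj0⟩ := Finset.exists_mem_eq_inf' hune (r n)
    obtain ⟨j1, -, hj1⟩ := Finset.exists_mem_eq_sup' hune (r n)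
    have hj0' : mn n = r n j0 := hj0
    have hj1' : Mx n = r n j1 := hj1
    have key : r (n + 1) i = (1 - ∑ j, a i j * s j) * r n i
        + ∑ j, (a i j * s j) * r n j := by
      have expand : ∑ j, a i j * s j * (r n j - r n i)
          = (∑ j, (a i j * s j) * r n j) - (∑ j, a i j * s j) * r n i := by
        rw [Finset.sum_mul, ← Finset.sum_sub_distrib]
        exact Finset.sum_congr rfl fun j _ => by ring
      rw [hrec n i, expand]; ring
    have hBpos : 0 ≤ 1 - ∑ j, a i j * s j := by linarith [hB1 i]
    have hbnn : ∀ j, 0 ≤ a i j * s j := fun j => le_trans hεpos.le (hεle i j)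
    constructor
    · -- upper bound using the minimizer j0
      have hS : ∑ j, (a i j * s j) * r n j
          ≤ (a i j0 * s j0) * mn n
            + ((∑ j, a i j * s j) - a i j0 * s j0) * Mx n := by
        rw [← Finset.add_sum_erase _ (fun j => (a i j * s j) * r n j) (mem_univ j0), hj0']
        have hub : ∑ j ∈ univ.erase j0, (a i j * s j) * r n j
            ≤ ∑ j ∈ univ.erase j0, (a i j * s j) * Mx n :=
          Finset.sum_le_sum fun j _ => mul_le_mul_of_nonneg_left (hle n j) (hbnn j)
        have herase : ∑ j ∈ univ.erase j0, (a i j * s j) * Mx n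
            = ((∑ j, a i j * s j) - a i j0 * s j0) * Mx n := by
          rw [Finset.sum_erase_eq_sub (mem_univ j0), ← Finset.sum_mul, sub_mul]
        linarith [hub, herase.le, herase.ge]
      have t1 : (1 - ∑ j, a i j * s j) * r n i ≤ (1 - ∑ j, a i j * s j) * Mx n :=
        mul_le_mul_of_nonneg_left (hle n i) hBpos
      have hfinal : (a i j0 * s j0 - ε) * (Mx n - mn n) ≥ 0 :=
        mul_nonneg (by linarith [hεle i j0]) (hosc0 n)
      rw [key]
      nlinarith [hS, t1, hfinal]
    · -- lower bound using the maximizer j1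
      have hS : (a i j1 * s j1) * Mx n
            + ((∑ j, a i j * s j) - a i j1 * s j1) * mn n
          ≤ ∑ j, (a i j * s j) * r n j := by
        rw [← Finset.add_sum_erase _ (fun j => (a i j * s j) * r n j) (mem_univ j1), hj1']
        have hub : ∑ j ∈ univ.erase j1, (a i j * s j) * mn n
            ≤ ∑ j ∈ univ.erase j1, (a i j * s j) * r n j :=
          Finset.sum_le_sum fun j _ => mul_le_mul_of_nonneg_left (hge n j) (hbnn j)
        have herase : ∑ j ∈ univ.erase j1, (a i j * s j) * mn n
            = ((∑ j, a i j * s j) - a i j1 * s j1) * mn n := by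
          rw [Finset.sum_erase_eq_sub (mem_univ j1), ← Finset.sum_mul, sub_mul]
        linarith [hub, herase.le, herase.ge]
      have t1 : (1 - ∑ j, a i j * s j) * mn n ≤ (1 - ∑ j, a i j * s j) * r n i :=
        mul_le_mul_of_nonneg_left (hge n i) hBpos
      have hfinal : (a i j1 * s j1 - ε) * (Mx n - mn n) ≥ 0 :=
        mul_nonneg (by linarith [hεle i j1]) (hosc0 n)
      rw [key]
      nlinarith [hS, t1, hfinal]
  -- contraction of the oscillation
  have hMx' : ∀ n, Mx (n + 1) ≤ Mx n - ε * (Mx n - mn n) := fun n =>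
    Finset.sup'_le _ _ fun i _ => (hstep n i).1
  have hmn' : ∀ n, mn n + ε * (Mx n - mn n) ≤ mn (n + 1) := fun n =>
    Finset.le_inf' _ _ fun i _ => (hstep n i).2
  have hcontr : ∀ n, Mx (n + 1) - mn (n + 1) ≤ (1 - 2 * ε) * (Mx n - mn n) := by
    intro n
    nlinarith [hMx' n, hmn' n]
  have hq0 : (0 : ℝ) ≤ 1 - 2 * ε := by linarith
  have hq1 : 1 - 2 * ε < 1 := by linarith
  have hdecay : ∀ n, Mx n - mn n ≤ (1 - 2 * ε) ^ n * (Mx 0 - mn 0) := by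
    intro n
    induction n with
    | zero => simp
    | succ n ih =>
      calc Mx (n + 1) - mn (n + 1) ≤ (1 - 2 * ε) * (Mx n - mn n) := hcontr n
        _ ≤ (1 - 2 * ε) * ((1 - 2 * ε) ^ n * (Mx 0 - mn 0)) :=
            mul_le_mul_of_nonneg_left ih hq0
        _ = (1 - 2 * ε) ^ (n + 1) * (Mx 0 - mn 0) := by ring
  have hqlim : Tendsto (fun n : ℕ => (1 - 2 * ε) ^ n * (Mx 0 - mn 0)) atTop (nhds 0) := by
    have h := tendsto_pow_atTop_nhds_zero_of_lt_one hq0 hq1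
    simpa using h.mul_const (Mx 0 - mn 0)
  have hosclim : Tendsto (fun n => Mx n - mn n) atTop (nhds 0) :=
    squeeze_zero hosc0 hdecay hqlim
  -- conclusion
  intro i
  have hCnn : 0 ≤ ∑ j, a i j * (s i * s j) :=
    Finset.sum_nonneg fun j _ =>
      mul_nonneg (ha i j).1 (mul_nonneg (hs i).le (hs j).le)
  have hDle : ∀ n, ‖∑ j, a i j * ((x n i).2 * (x n j).1 - (x n i).1 * (x n j).2)‖
      ≤ (∑ j, a i j * (s i * s j)) * (Mx n - mn n) := by
    intro n
    have hform : ∀ j, a i j * ((x n i).2 * (x n j).1 - (x n i).1 * (x n j).2)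
        = a i j * (s i * s j) * (r n j - r n i) := fun j => by
      rw [hx1 n i, hx1 n j, hx2 n i, hx2 n j]; ring
    rw [Real.norm_eq_abs, Finset.sum_congr rfl fun j _ => hform j]
    calc |∑ j, a i j * (s i * s j) * (r n j - r n i)|
        ≤ ∑ j, |a i j * (s i * s j) * (r n j - r n i)| :=
          Finset.abs_sum_le_sum_abs _ _
      _ ≤ ∑ j, a i j * (s i * s j) * (Mx n - mn n) := by
          refine Finset.sum_le_sum fun j _ => ?_
          have hnn' : 0 ≤ a i j * (s i * s j) :=
            mul_nonneg (ha i j).1 (mul_nonneg (hs i).le (hs j).le)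
          rw [abs_mul, abs_of_nonneg hnn']
          refine mul_le_mul_of_nonneg_left ?_ hnn'
          rw [abs_sub_le_iff]
          exact ⟨by linarith [hle n j, hge n i], by linarith [hle n i, hge n j]⟩
      _ = (∑ j, a i j * (s i * s j)) * (Mx n - mn n) := by rw [Finset.sum_mul]
  have hglim : Tendsto (fun n => (∑ j, a i j * (s i * s j)) * (Mx n - mn n))
      atTop (nhds 0) := by
    simpa using hosclim.const_mul (∑ j, a i j * (s i * s j))
  exact squeeze_zero_norm hDle hglim
end

section
/- For each c ∈ S^{m-1}, the linear map u ↦ B_c u^T maps the set J_c = {u ∈ ℝ^m : 0 ≤ u_i ≤ c_i for all i} into itself. -/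
open Finset Matrix

/-- The linear map `u ↦ B_c u` maps `J_c = {u : 0 ≤ u_i ≤ c_i}` into itself. -/
theorem stmt_19 {m : ℕ} (hm : 2 ≤ m) (a : Fin m → Fin m → ℝ)
    (ha : ∀ i j, a i j ∈ Set.Icc (0 : ℝ) 1)
    (c : Fin m → ℝ) (hc : c ∈ stdSimplex ℝ (Fin m)) :
    ∀ u ∈ {u : Fin m → ℝ | ∀ i, 0 ≤ u i ∧ u i ≤ c i},
      (Bmat a c) *ᵥ u ∈ {u : Fin m → ℝ | ∀ i, 0 ≤ u i ∧ u i ≤ c i} := by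
  intro u hu
  obtain ⟨hc0, hcsum⟩ := hc
  intro i
  set S : ℝ := ∑ j ∈ Finset.univ.erase i, a i j * c j with hS
  have hBu : (Bmat a c *ᵥ u) i
      = (1 - S) * u i + ∑ k ∈ Finset.univ.erase i, c i * a i k * u k := by
    simp only [Matrix.mulVec, dotProduct, Bmat, Matrix.of_apply]
    rw [← Finset.add_sum_erase _ _ (Finset.mem_univ i)]
    rw [if_pos rfl]
    congr 1
    refine Finset.sum_congr rfl fun k hk => ?_
    rw [if_neg (Finset.ne_of_mem_erase hk).symm]
  have herase : ∑ j ∈ Finset.univ.erase i, c j = 1 - c i := by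
    have h := Finset.add_sum_erase Finset.univ c (Finset.mem_univ i)
    rw [hcsum] at h
    linarith
  have hSle : S ≤ 1 - c i := by
    rw [hS, ← herase]
    exact Finset.sum_le_sum fun j _ =>
      mul_le_of_le_one_left (hc0 j) (ha i j).2
  have hDpos : 0 ≤ 1 - S := by linarith [hc0 i]
  constructor
  · rw [hBu]
    have h1 : 0 ≤ (1 - S) * u i := mul_nonneg hDpos (hu i).1
    have h2 : 0 ≤ ∑ k ∈ Finset.univ.erase i, c i * a i k * u k :=
      Finset.sum_nonneg fun k _ =>
        mul_nonneg (mul_nonneg (hc0 i) (ha i k).1) (hu k).1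
    linarith
  · rw [hBu]
    have h1 : (1 - S) * u i ≤ (1 - S) * c i :=
      mul_le_mul_of_nonneg_left (hu i).2 hDpos
    have h2 : ∑ k ∈ Finset.univ.erase i, c i * a i k * u k
        ≤ ∑ k ∈ Finset.univ.erase i, c i * a i k * c k :=
      Finset.sum_le_sum fun k _ =>
        mul_le_mul_of_nonneg_left (hu k).2 (mul_nonneg (hc0 i) (ha i k).1)
    have h3 : ∑ k ∈ Finset.univ.erase i, c i * a i k * c k = c i * S := by
      rw [hS, Finset.mul_sum]
      exact Finset.sum_congr rfl fun k _ => by ring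
    have : (1 - S) * c i + c i * S = c i := by ring
    linarith
end
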